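/- Let v, w ≥ 2 be natural numbers, let γ > ζ be real numbers, and let f : Fin w → Fin v → EuclideanSpace ℝ (Fin (v−1)) be such that each f i is a regular simplex and for all i ≠ j and all a, b, ⟪f i a, f j b⟫ ∈ {γ, ζ}. Define matrices B i j ∈ Matrix (Fin v) (Fin v) ℝ for i ≠ j by (B i j) a b = 1 if ⟪f i a, f j b⟫ = γ and 0 otherwise. Then there exist real numbers k, λ, μ, ν with μ > ν such that {B i j} is an LSSD(v,k,λ;w) with linking parameters μ, ν; that is, a set of w pairwise linked regular simplices in ℝ^(v−1) gives rise to a μ-heavy linked system of symmetric designs on w fibers. -/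

import Mathlib

/-!
The cross-Gram matrices `C i j = (⟪f i a, f j b⟫)_{a,b}` carry the argument. A regular simplex
`a` in `ℝ^(v-1)` spans (any `v - 1` of its vectors are independent) and is therefore a tight
frame, `∑ ⟪a i, y⟫ • a i = (v/(v-1)) • y`, as one checks on each `a j`. This gives
`C i h * C h j = (v/(v-1)) • C i j`; and `∑ a i = 0` kills all row and column sums of `C i j`.
For `i ≠ j` the two inner product values make `C i j = (γ - ζ) • B i j + ζ • J`, so these
identities become quadratic relations for the `0/1` matrices `B i j`: with `h = j` the
symmetric-design equation (using the Gram matrix `C i i` of a single simplex), with `h ∉ {i, j}`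
the linking equation with `μ - ν = v / ((v - 1)(γ - ζ)) > 0`.
-/

open Matrix RealInnerProductSpace

/-- The all-ones `v × v` real matrix. -/
def J (v : ℕ) : Matrix (Fin v) (Fin v) ℝ := Matrix.of fun _ _ => 1

/-- A linked system of symmetric designs `LSSD(v,k,λ;w)` with linking parameters `μ, ν`. -/
def IsLSSD (v w : ℕ) (k lam mu nu : ℝ)
    (B : Fin w → Fin w → Matrix (Fin v) (Fin v) ℝ) : Prop :=
  (∀ i j : Fin w, i ≠ j → ∀ a b : Fin v, B i j a b = 0 ∨ B i j a b = 1) ∧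
  (∀ i j : Fin w, i ≠ j → B j i = (B i j)ᵀ) ∧
  (∀ i j : Fin w, i ≠ j →
    B i j * (B i j)ᵀ = (k - lam) • (1 : Matrix (Fin v) (Fin v) ℝ) + lam • J v ∧
    (B i j)ᵀ * B i j = (k - lam) • (1 : Matrix (Fin v) (Fin v) ℝ) + lam • J v) ∧
  (∀ h i j : Fin w, h ≠ i → h ≠ j → i ≠ j →
    B i h * B h j = nu • J v + (mu - nu) • B i j)

/-- A regular simplex in `ℝ^(v-1)`: a family of `v` unit vectors with pairwise
inner products `-1/(v-1)`. -/
def IsRegularSimplex (v : ℕ) (a : Fin v → EuclideanSpace ℝ (Fin (v - 1))) : Prop :=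
  (∀ i, ‖a i‖ = 1) ∧
  ∀ i j, i ≠ j → ⟪a i, a j⟫ = -1 / ((v : ℝ) - 1)

theorem sub_one_pos_of_two_le {v : ℕ} (hv : 2 ≤ v) : (0 : ℝ) < v - 1 := by
  have : (2 : ℝ) ≤ v := by exact_mod_cast hv
  linarith

namespace IsRegularSimplex

variable {v : ℕ} {a : Fin v → EuclideanSpace ℝ (Fin (v - 1))}

theorem inner_eq (hv : 2 ≤ v) (h : IsRegularSimplex v a) (i j : Fin v) :
    ⟪a i, a j⟫ = (if i = j then (v : ℝ) / (v - 1) else 0) - 1 / (v - 1) := by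
  have hv1 : (v : ℝ) - 1 ≠ 0 := (sub_one_pos_of_two_le hv).ne'
  by_cases hij : i = j
  · subst hij
    rw [real_inner_self_eq_norm_sq, h.1, if_pos rfl]
    field_simp
  · rw [h.2 i j hij, if_neg hij]
    ring

theorem inner_sum_smul (hv : 2 ≤ v) (h : IsRegularSimplex v a) (x : Fin v → ℝ) (j : Fin v) :
    ⟪∑ i, x i • a i, a j⟫ = (v : ℝ) / (v - 1) * x j - (∑ i, x i) / (v - 1) := by
  simp only [sum_inner, real_inner_smul_left, h.inner_eq hv, mul_sub, mul_ite, mul_zero,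
    Finset.sum_sub_distrib, Finset.sum_ite_eq', Finset.mem_univ, if_true, ← Finset.sum_mul]
  ring

theorem sum_eq_zero (hv : 2 ≤ v) (h : IsRegularSimplex v a) : ∑ i, a i = 0 := by
  have hrow (j : Fin v) : ⟪∑ i, a i, a j⟫ = 0 := by
    simpa [Fintype.card_fin] using h.inner_sum_smul hv 1 j
  rw [← inner_self_eq_zero (𝕜 := ℝ), inner_sum]
  simp [hrow]

theorem eq_of_sum_smul_eq_zero (hv : 2 ≤ v) (h : IsRegularSimplex v a) {x : Fin v → ℝ}
    (hx : ∑ i, x i • a i = 0) (i j : Fin v) : x i = x j := by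
  have hcoord (j : Fin v) : (v : ℝ) / (v - 1) * x j = (∑ i, x i) / (v - 1) :=
    sub_eq_zero.mp (by simpa [hx] using (h.inner_sum_smul hv x j).symm)
  have hc : (v : ℝ) / (v - 1) ≠ 0 :=
    (div_pos (by positivity) (sub_one_pos_of_two_le hv)).ne'
  exact mul_left_cancel₀ hc ((hcoord i).trans (hcoord j).symm)

theorem span_eq_top (hv : 2 ≤ v) (h : IsRegularSimplex v a) :
    Submodule.span ℝ (Set.range a) = ⊤ := by
  obtain ⟨n, rfl⟩ : ∃ n, v = n + 1 := ⟨v - 1, by omega⟩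
  have hli : LinearIndependent ℝ (a ∘ Fin.succ) := by
    rw [Fintype.linearIndependent_iff]
    intro g hg i
    -- padded by `0`, a dependency of `a ∘ Fin.succ` is one of `a`, whose coefficients agree
    have hx : ∑ j, (Fin.cons 0 g : Fin (n + 1) → ℝ) j • a j = 0 := by
      simpa [Fin.sum_univ_succ] using hg
    simpa using h.eq_of_sum_smul_eq_zero hv hx i.succ 0
  have hcard :
      Fintype.card (Fin n) = Module.finrank ℝ (EuclideanSpace ℝ (Fin (n + 1 - 1))) := by
    simp
  rw [eq_top_iff, ← hli.span_eq_top_of_card_eq_finrank' hcard]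
  exact Submodule.span_mono (Set.range_comp_subset_range _ _)

theorem sum_inner_smul (hv : 2 ≤ v) (h : IsRegularSimplex v a)
    (y : EuclideanSpace ℝ (Fin (v - 1))) :
    ∑ i, ⟪a i, y⟫ • a i = ((v : ℝ) / (v - 1)) • y := by
  have hmap :
      ∑ i, (innerₛₗ ℝ (a i)).smulRight (a i) = ((v : ℝ) / (v - 1)) • LinearMap.id := by
    refine LinearMap.ext_on_range (h.span_eq_top hv) fun j => ?_
    simp [h.inner_eq hv, sub_smul, ite_smul, ← Finset.smul_sum, h.sum_eq_zero hv]
  simpa using LinearMap.congr_fun hmap y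

theorem sum_inner_mul_inner (hv : 2 ≤ v) (h : IsRegularSimplex v a)
    (x y : EuclideanSpace ℝ (Fin (v - 1))) :
    ∑ i, ⟪x, a i⟫ * ⟪a i, y⟫ = (v : ℝ) / (v - 1) * ⟪x, y⟫ := by
  simpa [inner_sum, real_inner_smul_right, mul_comm] using
    congrArg (⟪x, ·⟫) (h.sum_inner_smul hv y)

end IsRegularSimplex

section TwoLevelMatrices

variable {v : ℕ}

@[simp]
theorem J_apply (a b : Fin v) : J v a b = 1 := rfl

theorem J_mul_J : J v * J v = (v : ℝ) • J v := by
  ext a b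
  simp [Matrix.mul_apply]

theorem eq_smul_indicator_add_smul_J (M : Matrix (Fin v) (Fin v) ℝ) {γ ζ : ℝ}
    (hM : ∀ a b, M a b = γ ∨ M a b = ζ) :
    M = (γ - ζ) • Matrix.of (fun a b => if M a b = γ then (1 : ℝ) else 0) + ζ • J v := by
  ext a b
  by_cases hγ : M a b = γ
  · simp [hγ]
  · simpa [hγ] using (hM a b).resolve_left hγ

theorem mul_eq_of_eq_smul_add_smul_J {M N X Y : Matrix (Fin v) (Fin v) ℝ} {d ζ : ℝ}
    (hM : M = d • X + ζ • J v) (hN : N = d • Y + ζ • J v) (hMJ : M * J v = 0)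
    (hJN : J v * N = 0) :
    M * N = (d * d) • (X * Y) - (ζ * ζ * v) • J v := by
  have hJY : d • (J v * Y) = -(ζ * v) • J v := by
    rw [hN, Matrix.mul_add, Matrix.mul_smul, Matrix.mul_smul, J_mul_J] at hJN
    linear_combination (norm := module) hJN
  calc M * N = d • (M * Y) := by
        rw [hN, Matrix.mul_add, Matrix.mul_smul, Matrix.mul_smul, hMJ, smul_zero, add_zero]
    _ = (d * d) • (X * Y) + ζ • d • (J v * Y) := by
        rw [hM, Matrix.add_mul, Matrix.smul_mul, Matrix.smul_mul]
        module
    _ = (d * d) • (X * Y) - (ζ * ζ * v) • J v := by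
        rw [hJY]
        module

end TwoLevelMatrices

section LinkedSimplices

variable {v w : ℕ} (f : Fin w → Fin v → EuclideanSpace ℝ (Fin (v - 1)))

noncomputable def crossGram (i j : Fin w) : Matrix (Fin v) (Fin v) ℝ :=
  Matrix.of fun a b => ⟪f i a, f j b⟫

noncomputable def linkMatrix (γ : ℝ) (i j : Fin w) : Matrix (Fin v) (Fin v) ℝ :=
  Matrix.of fun a b => if ⟪f i a, f j b⟫ = γ then (1 : ℝ) else 0

theorem linkMatrix_apply_eq_zero_or_one (γ : ℝ) (i j : Fin w) (a b : Fin v) :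
    linkMatrix f γ i j a b = 0 ∨ linkMatrix f γ i j a b = 1 := by
  by_cases h : ⟪f i a, f j b⟫ = γ <;> simp [linkMatrix, h]

theorem linkMatrix_transpose (γ : ℝ) (i j : Fin w) :
    (linkMatrix f γ i j)ᵀ = linkMatrix f γ j i := by
  ext a b
  simp [linkMatrix, real_inner_comm]

variable {f} {γ ζ : ℝ}

theorem crossGram_mul_crossGram (hv : 2 ≤ v) {h : Fin w} (hf : IsRegularSimplex v (f h))
    (i j : Fin w) :
    crossGram f i h * crossGram f h j = ((v : ℝ) / (v - 1)) • crossGram f i j := by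
  ext a b
  simp [crossGram, Matrix.mul_apply, hf.sum_inner_mul_inner hv]

theorem crossGram_self (hv : 2 ≤ v) {i : Fin w} (hf : IsRegularSimplex v (f i)) :
    crossGram f i i = ((v : ℝ) / (v - 1)) • 1 - (1 / ((v : ℝ) - 1)) • J v := by
  ext a b
  simp [crossGram, Matrix.one_apply, hf.inner_eq hv]

theorem crossGram_mul_J (hv : 2 ≤ v) {j : Fin w} (hf : IsRegularSimplex v (f j)) (i : Fin w) :
    crossGram f i j * J v = 0 := by
  ext a b
  simp [crossGram, Matrix.mul_apply, ← inner_sum, hf.sum_eq_zero hv]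

theorem J_mul_crossGram (hv : 2 ≤ v) {i : Fin w} (hf : IsRegularSimplex v (f i)) (j : Fin w) :
    J v * crossGram f i j = 0 := by
  ext a b
  simp [crossGram, Matrix.mul_apply, ← sum_inner, hf.sum_eq_zero hv]

theorem crossGram_eq_linkMatrix {i j : Fin w}
    (hlink : ∀ a b, ⟪f i a, f j b⟫ = γ ∨ ⟪f i a, f j b⟫ = ζ) :
    crossGram f i j = (γ - ζ) • linkMatrix f γ i j + ζ • J v :=
  eq_smul_indicator_add_smul_J _ hlink

theorem linkMatrix_mul_linkMatrix_swap (hv : 2 ≤ v) (hreg : ∀ i, IsRegularSimplex v (f i))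
    (hlink : ∀ i j : Fin w, i ≠ j → ∀ a b : Fin v,
      ⟪f i a, f j b⟫ = γ ∨ ⟪f i a, f j b⟫ = ζ)
    (hγζ : γ ≠ ζ) {i j : Fin w} (hij : i ≠ j) :
    linkMatrix f γ i j * linkMatrix f γ j i =
      ((v : ℝ) / (v - 1) / (γ - ζ)) ^ 2 • 1 +
        ((ζ ^ 2 * v - (v : ℝ) / (v - 1) / (v - 1)) / (γ - ζ) ^ 2) • J v := by
  have hd : γ - ζ ≠ 0 := sub_ne_zero.mpr hγζ
  have key := crossGram_mul_crossGram hv (hreg j) i i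
  rw [mul_eq_of_eq_smul_add_smul_J (crossGram_eq_linkMatrix (hlink i j hij))
    (crossGram_eq_linkMatrix (hlink j i hij.symm)) (crossGram_mul_J hv (hreg j) i)
    (J_mul_crossGram hv (hreg j) i), crossGram_self hv (hreg i)] at key
  have hk : (γ - ζ) * (γ - ζ) * ((v : ℝ) / (v - 1) / (γ - ζ)) ^ 2 =
      (v : ℝ) / (v - 1) * (v / (v - 1)) := by
    field_simp
  have hl : (γ - ζ) * (γ - ζ) * ((ζ ^ 2 * v - (v : ℝ) / (v - 1) / (v - 1)) / (γ - ζ) ^ 2) =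
      ζ ^ 2 * v - (v : ℝ) / (v - 1) / (v - 1) := by
    field_simp
  refine smul_right_injective _ (mul_ne_zero hd hd) ((eq_add_of_sub_eq key).trans ?_)
  simp only [smul_add, smul_smul, hk, hl]
  module

theorem linkMatrix_mul_linkMatrix (hv : 2 ≤ v) (hreg : ∀ i, IsRegularSimplex v (f i))
    (hlink : ∀ i j : Fin w, i ≠ j → ∀ a b : Fin v,
      ⟪f i a, f j b⟫ = γ ∨ ⟪f i a, f j b⟫ = ζ)
    (hγζ : γ ≠ ζ) {h i j : Fin w} (hhi : h ≠ i) (hhj : h ≠ j) (hij : i ≠ j) :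
    linkMatrix f γ i h * linkMatrix f γ h j =
      (((v : ℝ) / (v - 1) * ζ + ζ ^ 2 * v) / (γ - ζ) ^ 2) • J v +
        ((v : ℝ) / (v - 1) / (γ - ζ)) • linkMatrix f γ i j := by
  have hd : γ - ζ ≠ 0 := sub_ne_zero.mpr hγζ
  have key := crossGram_mul_crossGram hv (hreg h) i j
  rw [mul_eq_of_eq_smul_add_smul_J (crossGram_eq_linkMatrix (hlink i h hhi.symm))
    (crossGram_eq_linkMatrix (hlink h j hhj)) (crossGram_mul_J hv (hreg h) i)
    (J_mul_crossGram hv (hreg h) j), crossGram_eq_linkMatrix (hlink i j hij)] at key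
  have hn : (γ - ζ) * (γ - ζ) * (((v : ℝ) / (v - 1) * ζ + ζ ^ 2 * v) / (γ - ζ) ^ 2) =
      (v : ℝ) / (v - 1) * ζ + ζ ^ 2 * v := by
    field_simp
  have hm : (γ - ζ) * (γ - ζ) * ((v : ℝ) / (v - 1) / (γ - ζ)) =
      (v : ℝ) / (v - 1) * (γ - ζ) := by
    field_simp
  refine smul_right_injective _ (mul_ne_zero hd hd) ((eq_add_of_sub_eq key).trans ?_)
  simp only [smul_add, smul_smul, hn, hm]
  module

end LinkedSimplices

theorem stmt_9_general (v w : ℕ) (hv : 2 ≤ v) (γ ζ : ℝ) (hγζ : γ > ζ)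
    (f : Fin w → Fin v → EuclideanSpace ℝ (Fin (v - 1)))
    (hreg : ∀ i, IsRegularSimplex v (f i))
    (hlink : ∀ i j : Fin w, i ≠ j → ∀ a b : Fin v,
      ⟪f i a, f j b⟫ = γ ∨ ⟪f i a, f j b⟫ = ζ) :
    ∃ k lam mu nu : ℝ, mu > nu ∧
      IsLSSD v w k lam mu nu
        (fun i j => Matrix.of fun a b => if ⟪f i a, f j b⟫ = γ then (1 : ℝ) else 0) := by
  show ∃ k lam mu nu : ℝ, mu > nu ∧ IsLSSD v w k lam mu nu (linkMatrix f γ)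
  set c : ℝ := v / (v - 1)
  set lam : ℝ := (ζ ^ 2 * v - c / (v - 1)) / (γ - ζ) ^ 2
  set nu : ℝ := (c * ζ + ζ ^ 2 * v) / (γ - ζ) ^ 2
  have hc : 0 < c := div_pos (by positivity) (sub_one_pos_of_two_le hv)
  refine ⟨(c / (γ - ζ)) ^ 2 + lam, lam, nu + c / (γ - ζ), nu,
    lt_add_of_pos_right _ (div_pos hc (sub_pos.mpr hγζ)),
    fun i j _ => linkMatrix_apply_eq_zero_or_one f γ i j,
    fun i j _ => (linkMatrix_transpose f γ i j).symm,
    fun i j hij => ?_, fun h i j hhi hhj hij => ?_⟩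
  · rw [add_sub_cancel_right, linkMatrix_transpose f γ i j]
    exact ⟨linkMatrix_mul_linkMatrix_swap hv hreg hlink hγζ.ne' hij,
      linkMatrix_mul_linkMatrix_swap hv hreg hlink hγζ.ne' hij.symm⟩
  · rw [add_sub_cancel_left]
    exact linkMatrix_mul_linkMatrix hv hreg hlink hγζ.ne' hhi hhj hij

theorem stmt_9 (v w : ℕ) (hv : 2 ≤ v) (hw : 2 ≤ w) (γ ζ : ℝ) (hγζ : γ > ζ)
    (f : Fin w → Fin v → EuclideanSpace ℝ (Fin (v - 1)))
    (hreg : ∀ i, IsRegularSimplex v (f i))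
    (hlink : ∀ i j : Fin w, i ≠ j → ∀ a b : Fin v,
      ⟪f i a, f j b⟫ = γ ∨ ⟪f i a, f j b⟫ = ζ) :
    ∃ k lam mu nu : ℝ, mu > nu ∧
      IsLSSD v w k lam mu nu
        (fun i j => Matrix.of fun a b => if ⟪f i a, f j b⟫ = γ then (1 : ℝ) else 0) :=
  stmt_9_general v w hv γ ζ hγζ f hreg hlink
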